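/- For every nonzero integer k, the set {n ∈ ℕ : t_2(n) = k} is infinite; in particular the set of values of the sequence (t_2(n))_{n∈ℕ} is exactly ℤ \ {0}. -/

import Mathlib

/-- The generating function `T(x) = ∑ (-1)^{s₂(n)} xⁿ = ∏ (1 - x^{2^j})`
of the Prouhet–Thue–Morse sequence. -/
noncomputable def T : PowerSeries ℤ :=
  PowerSeries.mk fun n => (-1) ^ (Nat.digits 2 n).sum

/-!
From `T(x) = (1 - x) T(x²)` one gets `t₂(2n + 1) = -2 t₂(n)` and `t₂(2n + 2) = t₂(n) + t₂(n + 1)`,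
so the pairs `(t₂(r), t₂(r + 1))` form a binary tree rooted at `(1, -2)` with children
`(-2a, a + b)` and `(a + b, -2b)` of `(a, b)`. Every pair with `a ≠ 0`, `gcd(a, b) = 1` and
`3a + b ≡ 1 (mod 8)` descends to the root by the inverse steps, so it lies in the tree. Taking `(k, 1 + k(8j + 5))` for `j ∈ ℕ` shows that `k ≠ 0` is taken
infinitely often. Nonvanishing holds because `t₂(2n)` is odd.
-/

open PowerSeries Finset

theorem Finset.sum_range_two_mul {M : Type*} [AddCommMonoid M] (f : ℕ → M) (m : ℕ) :
    ∑ i ∈ range (2 * m), f i = ∑ i ∈ range m, (f (2 * i) + f (2 * i + 1)) := by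
  induction m with
  | zero => simp
  | succ m ih => rw [mul_add_one, sum_range_succ, sum_range_succ, sum_range_succ, ih, add_assoc]

lemma coeff_T_zero : coeff 0 T = 1 := by simp [T]

lemma coeff_T_two_mul (n : ℕ) : coeff (2 * n) T = coeff n T := by
  rcases eq_or_ne n 0 with rfl | hn
  · rfl
  simp only [T, coeff_mk]
  rw [← zero_add (2 * n), Nat.digits_add 2 one_lt_two 0 n two_pos (.inr hn), List.sum_cons,
    zero_add]

lemma coeff_T_two_mul_add_one (n : ℕ) : coeff (2 * n + 1) T = -coeff n T := by
  simp only [T, coeff_mk]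
  rw [add_comm, Nat.digits_add 2 one_lt_two 1 n one_lt_two (.inl one_ne_zero), List.sum_cons,
    pow_add, pow_one, neg_one_mul]

noncomputable def t₂ (n : ℕ) : ℤ := coeff n (T ^ 2)

lemma t₂_eq_sum (n : ℕ) : t₂ n = ∑ i ∈ range (n + 1), coeff i T * coeff (n - i) T := by
  rw [t₂, sq, coeff_mul, Nat.sum_antidiagonal_eq_sum_range_succ_mk]

lemma t₂_zero : t₂ 0 = 1 := by simp [t₂_eq_sum, coeff_T_zero]

lemma t₂_two_mul_add_one (n : ℕ) : t₂ (2 * n + 1) = -2 * t₂ n := by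
  rw [t₂_eq_sum, t₂_eq_sum, show 2 * n + 1 + 1 = 2 * (n + 1) by ring, sum_range_two_mul, mul_sum]
  refine sum_congr rfl fun i hi => ?_
  have hi : i ≤ n := Nat.lt_succ_iff.mp (mem_range.mp hi)
  rw [show 2 * n + 1 - 2 * i = 2 * (n - i) + 1 by omega,
    show 2 * n + 1 - (2 * i + 1) = 2 * (n - i) by omega]
  simp only [coeff_T_two_mul, coeff_T_two_mul_add_one]
  ring

lemma t₂_two_mul_add_two (n : ℕ) : t₂ (2 * n + 2) = t₂ (n + 1) + t₂ n := by
  have hpair : ∀ i ∈ range (n + 1),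
      coeff (2 * i) T * coeff (2 * n + 2 - 2 * i) T
        + coeff (2 * i + 1) T * coeff (2 * n + 2 - (2 * i + 1)) T
      = coeff i T * coeff (n + 1 - i) T + coeff i T * coeff (n - i) T := fun i hi => by
    have hi : i ≤ n := Nat.lt_succ_iff.mp (mem_range.mp hi)
    rw [show 2 * n + 2 - 2 * i = 2 * (n + 1 - i) by omega,
      show 2 * n + 2 - (2 * i + 1) = 2 * (n - i) + 1 by omega]
    simp only [coeff_T_two_mul, coeff_T_two_mul_add_one]
    ring
  rw [t₂_eq_sum, t₂_eq_sum, t₂_eq_sum, show 2 * n + 2 + 1 = 2 * (n + 1) + 1 by ring,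
    sum_range_succ, sum_range_two_mul, sum_congr rfl hpair, sum_add_distrib,
    sum_range_succ _ (n + 1), show 2 * n + 2 - 2 * (n + 1) = 0 by omega, Nat.sub_self,
    coeff_T_two_mul, coeff_T_zero]
  ring

lemma t₂_one : t₂ 1 = -2 := by
  simpa [t₂_zero] using t₂_two_mul_add_one 0

lemma odd_t₂_two_mul (n : ℕ) : Odd (t₂ (2 * n)) := by
  induction n using Nat.strong_induction_on with
  | _ n ih =>
  rcases n with _ | n
  · simp [t₂_zero]
  have heven (m : ℕ) : Even (t₂ (2 * m + 1)) := by
    rw [t₂_two_mul_add_one]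
    exact even_neg_two.mul_right _
  rw [mul_add_one, t₂_two_mul_add_two]
  rcases Nat.even_or_odd' n with ⟨m, rfl | rfl⟩
  · exact (heven m).add_odd (ih m (by omega))
  · rw [show 2 * m + 1 + 1 = 2 * (m + 1) by ring]
    exact (ih (m + 1) (by omega)).add_even (heven m)

lemma t₂_ne_zero (n : ℕ) : t₂ n ≠ 0 := by
  induction n using Nat.strong_induction_on with
  | _ n ih =>
  rcases Nat.even_or_odd' n with ⟨m, rfl | rfl⟩
  · exact fun h => by simpa [h] using odd_t₂_two_mul m
  · rw [t₂_two_mul_add_one]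
    exact mul_ne_zero (by norm_num) (ih m (by omega))

/-- The inverse steps `(2c, b) ↦ (-c, b + c)` and `(a, 2c) ↦ (a + c, -c)` do not increase
`|a| + |b|`; they preserve it only when the entries of the larger pair have the same sign, and
those of the smaller pair then have opposite signs. -/
def descentMeasure (a b : ℤ) : ℕ :=
  2 * (a.natAbs + b.natAbs) + if 0 < a ∧ 0 < b ∨ a < 0 ∧ b < 0 then 1 else 0

theorem exists_consecutive_t₂_eq {a b : ℤ} (ha : a ≠ 0) (hab : IsCoprime a b)
    (h8 : (3 * a + b) % 8 = 1) : ∃ r, t₂ r = a ∧ t₂ (r + 1) = b := by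
  have hb : b ≠ 0 := by
    rintro rfl
    rw [isCoprime_zero_right, Int.isUnit_iff] at hab
    omega
  by_cases hbase : a = 1 ∧ b = -2
  · exact ⟨0, by rw [t₂_zero, hbase.1], by rw [t₂_one, hbase.2]⟩
  obtain ⟨u, v, huv⟩ := hab
  rcases Int.even_or_odd' a with ⟨c, rfl | hodd⟩
  · obtain ⟨r, hr, hr1⟩ := exists_consecutive_t₂_eq (a := -c) (b := b + c) (by omega)
      ⟨v - 2 * u, v, by linear_combination huv⟩ (by omega)
    exact ⟨2 * r + 1, by rw [t₂_two_mul_add_one, hr]; ring,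
      by rw [t₂_two_mul_add_two, hr, hr1]; ring⟩
  · obtain ⟨c, rfl⟩ : ∃ c, b = 2 * c := ⟨b / 2, by omega⟩
    have hcop : IsCoprime (a + c) (-c) := ⟨u, u - 2 * v, by linear_combination huv⟩
    have hac : a + c ≠ 0 := fun h0 => by
      rw [h0, isCoprime_zero_left, Int.isUnit_iff] at hcop
      omega
    obtain ⟨r, hr, hr1⟩ := exists_consecutive_t₂_eq hac hcop (by omega)
    exact ⟨2 * r + 2, by rw [t₂_two_mul_add_two, hr, hr1]; ring,
      by rw [show 2 * r + 2 + 1 = 2 * (r + 1) + 1 by ring, t₂_two_mul_add_one, hr1]; ring⟩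
termination_by descentMeasure a b
decreasing_by all_goals (unfold descentMeasure; split_ifs <;> omega)

theorem infinite_setOf_t₂_eq {k : ℤ} (hk : k ≠ 0) : {n | t₂ n = k}.Infinite := by
  have hpair (j : ℕ) : ∃ r, t₂ r = k ∧ t₂ (r + 1) = 1 + k * (8 * j + 5) :=
    exists_consecutive_t₂_eq hk ⟨-(8 * j + 5), 1, by ring⟩
      (by rw [show 3 * k + (1 + k * (8 * j + 5)) = 1 + 8 * (k * (j + 1)) by ring]; omega)
  choose f hf using hpair
  refine Set.infinite_of_injective_forall_mem (fun i j hij => ?_) fun j => (hf j).1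
  have := mul_left_cancel₀ hk (add_left_cancel ((hf i).2.symm.trans (hij ▸ (hf j).2)))
  omega

theorem stmt12 :
    (∀ k : ℤ, k ≠ 0 → {n : ℕ | PowerSeries.coeff n (T ^ 2) = k}.Infinite) ∧
    Set.range (fun n : ℕ => PowerSeries.coeff n (T ^ 2)) = {k : ℤ | k ≠ 0} :=
  ⟨fun _ hk => infinite_setOf_t₂_eq hk, Set.ext fun k =>
    ⟨by rintro ⟨n, rfl⟩; exact t₂_ne_zero n, fun hk => (infinite_setOf_t₂_eq hk).nonempty⟩⟩
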